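/- arXiv:1212.1851 — 13 statements merged into one kernel-verified Lean document; each statement's English description precedes it below -/
import Mathlib

section
/- Let R be a unital ring, a ∈ R, and p, q idempotents in R. If b ∈ R satisfies bab = b, ba = p, and 1 - ab = q, then b is unique: any b' satisfying these three equations equals b. -/
theorem stmt_0 {R : Type*} [Ring R] (a p q b b' : R)
    (hp : IsIdempotentElem p) (hq : IsIdempotentElem q)
    (h1 : b * a * b = b) (h2 : b * a = p) (h3 : 1 - a * b = q)
    (h1' : b' * a * b' = b') (h2' : b' * a = p) (h3' : 1 - a * b' = q) :
    b' = b := by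
  have hab : a * b' = a * b := by
    have h := h3'.trans h3.symm
    exact sub_right_injective h
  calc b' = b' * a * b' := h1'.symm
    _ = b' * (a * b) := by rw [mul_assoc, hab]
    _ = b * a * b := by rw [← mul_assoc, h2', ← h2]
    _ = b := h1
end

section
/- Let R be a unital ring, a ∈ R, and p, q idempotents. If b ∈ R satisfies bab = b, bR = pR, and K_r(b) = qR, then b = pb, p = bap, b(1-q) = b, and 1-q = (1-q)ab. -/
theorem stmt_5 {R : Type*} [Ring R] (a p q b : R)
    (hp : IsIdempotentElem p) (hq : IsIdempotentElem q)
    (h1 : b * a * b = b)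
    (h2 : {y : R | ∃ t : R, y = b * t} = {y : R | ∃ t : R, y = p * t})
    (h3 : {z : R | b * z = 0} = {y : R | ∃ t : R, y = q * t}) :
    b = p * b ∧ p = b * a * p ∧ b * (1 - q) = b ∧ 1 - q = (1 - q) * a * b := by
  have hb : b ∈ {y : R | ∃ t : R, y = p * t} := by
    rw [← h2]; exact ⟨1, (mul_one b).symm⟩
  obtain ⟨t, ht⟩ := hb
  have e1 : b = p * b := by
    rw [ht, ← mul_assoc, hp]
  have hpb : p ∈ {y : R | ∃ t : R, y = b * t} := by
    rw [h2]; exact ⟨p, hp.symm⟩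
  obtain ⟨s, hs⟩ := hpb
  have e2 : p = b * a * p := by
    rw [hs, ← mul_assoc, h1]
  have hbq : b * q = 0 := by
    have : q ∈ {z : R | b * z = 0} := by rw [h3]; exact ⟨q, hq.symm⟩
    exact this
  have e3 : b * (1 - q) = b := by rw [mul_sub, hbq, mul_one, sub_zero]
  have hab : (1 : R) - a * b ∈ {z : R | b * z = 0} := by
    show b * (1 - a * b) = 0
    rw [mul_sub, mul_one, ← mul_assoc, h1, sub_self]
  rw [h3] at hab
  obtain ⟨u, hu⟩ := hab
  have e4 : 1 - q = (1 - q) * a * b := by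
    have : (1 - q) * (1 - a * b) = 0 := by
      rw [hu, sub_mul, one_mul, ← mul_assoc, hq, sub_self]
    rw [mul_sub, mul_one, sub_eq_zero] at this
    rw [mul_assoc]; exact this
  exact ⟨e1, e2, e3, e4⟩
end

section
/- Let R be a unital ring, a ∈ R, and p, q idempotents. If b ∈ R satisfies b = pb, p = bap, b(1-q) = b, and 1-q = (1-q)ab, then bR = pR and K_r(b) = qR. -/
theorem stmt_6 {R : Type*} [Ring R] (a p q b : R)
    (hp : IsIdempotentElem p) (hq : IsIdempotentElem q)
    (h1 : b = p * b) (h2 : p = b * a * p)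
    (h3 : b * (1 - q) = b) (h4 : 1 - q = (1 - q) * a * b) :
    {y : R | ∃ t : R, y = b * t} = {y : R | ∃ t : R, y = p * t} ∧
    {z : R | b * z = 0} = {y : R | ∃ t : R, y = q * t} := by
  have hbq : b * q = 0 := by
    have := h3
    rw [mul_sub, mul_one, sub_eq_self] at this
    exact this
  constructor
  · ext y
    constructor
    · rintro ⟨t, rfl⟩
      exact ⟨b * t, by rw [← mul_assoc, ← h1]⟩
    · rintro ⟨t, rfl⟩
      exact ⟨a * p * t, by rw [← mul_assoc, ← mul_assoc, ← h2]⟩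
  · ext z
    constructor
    · intro hz
      refine ⟨z, ?_⟩
      have : (1 - q) * z = 0 := by
        calc (1 - q) * z = (1 - q) * a * b * z := by rw [← h4]
        _ = (1 - q) * a * (b * z) := by rw [mul_assoc]
        _ = 0 := by rw [hz, mul_zero]
      have h := this
      rw [sub_mul, one_mul, sub_eq_zero] at h
      exact h
    · rintro ⟨t, rfl⟩
      show b * (q * t) = 0
      rw [← mul_assoc, hbq, zero_mul]
end

section
/- Let R be a unital ring, a ∈ R, and p, q idempotents. Suppose b ∈ R satisfies bab = b, baR = pR, K_r(ab) = qR, Rba = Rp, and K_l(ab) = Rq. Then ba = p and ab = 1 - q, i.e., b is the (p,q)-outer generalized inverse of a. -/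
theorem stmt_8 {R : Type*} [Ring R] (a p q b : R)
    (hp : IsIdempotentElem p) (hq : IsIdempotentElem q)
    (h1 : b * a * b = b)
    (h2 : {y : R | ∃ t : R, y = b * a * t} = {y : R | ∃ t : R, y = p * t})
    (h3 : {z : R | a * b * z = 0} = {y : R | ∃ t : R, y = q * t})
    (h4 : {y : R | ∃ t : R, y = t * (b * a)} = {y : R | ∃ t : R, y = t * p})
    (h5 : {z : R | z * (a * b) = 0} = {y : R | ∃ t : R, y = t * q}) :
    b * a = p ∧ a * b = 1 - q := by
  -- idempotence of b*a and a*b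
  have hba : (b * a) * (b * a) = b * a := by
    calc (b * a) * (b * a) = (b * a * b) * a := by noncomm_ring
    _ = b * a := by rw [h1]
  have hab : (a * b) * (a * b) = a * b := by
    calc (a * b) * (a * b) = a * (b * a * b) := by noncomm_ring
    _ = a * b := by rw [h1]
  have e2 := Set.ext_iff.mp h2
  have e3 := Set.ext_iff.mp h3
  have e4 := Set.ext_iff.mp h4
  have e5 := Set.ext_iff.mp h5
  -- b*a = p
  obtain ⟨s, hs⟩ := (e2 (b * a)).mp ⟨1, (mul_one _).symm⟩
  obtain ⟨t, ht⟩ := (e2 p).mpr ⟨1, (mul_one _).symm⟩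
  obtain ⟨u, hu⟩ := (e4 (b * a)).mp ⟨1, (one_mul _).symm⟩
  have hbap1 : b * a * p = p := by
    rw [ht, ← mul_assoc, hba]
  have hbap2 : b * a * p = b * a := by
    rw [hu, mul_assoc, hp, ← hu]
  have key1 : b * a = p := by rw [← hbap2, hbap1]
  refine ⟨key1, ?_⟩
  -- 1 - a*b = q
  have hmem : a * b * (1 - a * b) = 0 := by rw [mul_sub, mul_one, hab, sub_self]
  obtain ⟨w, hw⟩ := (e3 (1 - a * b)).mp hmem
  have hqab : q * (a * b) = 0 := (e5 q).mpr ⟨1, (one_mul _).symm⟩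
  have : q * (1 - a * b) = q := by rw [mul_sub, mul_one, hqab, sub_zero]
  have : 1 - a * b = q := by
    rw [← this, hw, ← mul_assoc, hq]
  rw [← this, sub_sub_cancel]
end

section
/- Let R be a unital ring, a ∈ R, and p, q idempotents. If b ∈ R satisfies bab = b, ba = p, and 1 - ab = q, then K_r(a) ∩ pR = {0} and a·(pR) = (1-q)R, where K_r(a) = {x : ax = 0}. -/
theorem stmt_9 {R : Type*} [Ring R] (a p q b : R)
    (hp : IsIdempotentElem p) (hq : IsIdempotentElem q)
    (h1 : b * a * b = b) (h2 : b * a = p) (h3 : 1 - a * b = q) :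
    {x : R | a * x = 0} ∩ {y : R | ∃ t : R, y = p * t} = {0} ∧
    {y : R | ∃ t : R, y = a * (p * t)} = {y : R | ∃ t : R, y = (1 - q) * t} := by
  constructor
  · ext x
    simp only [Set.mem_inter_iff, Set.mem_setOf_eq, Set.mem_singleton_iff]
    constructor
    · rintro ⟨hax, t, rfl⟩
      have key : p * (p * t) = 0 := by
        calc p * (p * t) = b * (a * (p * t)) := by rw [← h2]; noncomm_ring
          _ = b * 0 := by rw [hax]
          _ = 0 := mul_zero b
      rwa [← mul_assoc, hp] at key
    · rintro rfl
      exact ⟨mul_zero a, 0, (mul_zero p).symm⟩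
  · ext y
    simp only [Set.mem_setOf_eq]
    constructor
    · rintro ⟨t, rfl⟩
      refine ⟨a * t, ?_⟩
      rw [← h3, sub_sub_cancel, ← h2]
      noncomm_ring
    · rintro ⟨t, rfl⟩
      refine ⟨b * t, ?_⟩
      rw [← h3, sub_sub_cancel, ← h2]
      conv_lhs => rw [← h1]
      noncomm_ring
end

section
/- Let R be a unital ring, a ∈ R, p, q idempotents. If there exists b ∈ R with bab = b, bR = pR, and K_r(b) = qR, then K_r(a) ∩ pR = {0} and R is the internal direct sum of a·(pR) and qR (i.e., every element of R is uniquely a sum of an element of {apt : t ∈ R} and an element of qR). -/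
theorem stmt_11 {R : Type*} [Ring R] (a p q : R)
    (hp : IsIdempotentElem p) (hq : IsIdempotentElem q)
    (h : ∃ b : R, b * a * b = b ∧
      {y : R | ∃ t : R, y = b * t} = {y : R | ∃ t : R, y = p * t} ∧
      {z : R | b * z = 0} = {y : R | ∃ t : R, y = q * t}) :
    {x : R | a * x = 0} ∩ {y : R | ∃ t : R, y = p * t} = {0} ∧
    (∀ x : R, ∃ u ∈ {y : R | ∃ t : R, y = a * (p * t)}, ∃ v ∈ {y : R | ∃ t : R, y = q * t},
      x = u + v) ∧
    (∀ u ∈ {y : R | ∃ t : R, y = a * (p * t)}, ∀ v ∈ {y : R | ∃ t : R, y = q * t},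
      ∀ u' ∈ {y : R | ∃ t : R, y = a * (p * t)}, ∀ v' ∈ {y : R | ∃ t : R, y = q * t},
      u + v = u' + v' → u = u' ∧ v = v') := by
  obtain ⟨b, hbab, h2, h3⟩ := h
  have hbp : ∀ y : R, (∃ t, y = b * t) ↔ (∃ t, y = p * t) := fun y =>
    Set.ext_iff.mp h2 y
  have hk : ∀ z : R, b * z = 0 ↔ ∃ t, z = q * t := fun z =>
    Set.ext_iff.mp h3 z
  -- key: if x ∈ pR and a*x = 0 then x = 0
  have key : ∀ x : R, (∃ t, x = p * t) → a * x = 0 → x = 0 := by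
    intro x hx hax
    obtain ⟨r, hr⟩ := (hbp x).mpr hx
    have : b * (a * x) = x := by
      rw [hr, ← mul_assoc, ← mul_assoc, hbab]
    rw [hax, mul_zero] at this
    exact this.symm
  refine ⟨?_, ?_, ?_⟩
  · ext x
    simp only [Set.mem_inter_iff, Set.mem_setOf_eq, Set.mem_singleton_iff]
    constructor
    · rintro ⟨hax, hx⟩; exact key x hx hax
    · rintro rfl; exact ⟨mul_zero a, 0, by rw [mul_zero]⟩
  · intro x
    obtain ⟨t, ht⟩ := (hbp (b * x)).mp ⟨x, rfl⟩
    refine ⟨a * (b * x), ⟨t, by rw [ht]⟩, x - a * (b * x), ?_, by abel⟩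
    rw [Set.mem_setOf_eq, ← hk]
    have : b * (x - a * (b * x)) = b * x - b * a * b * x := by noncomm_ring
    rw [this, hbab, sub_self]
  · rintro u ⟨t, rfl⟩ v ⟨s, rfl⟩ u' ⟨t', rfl⟩ v' ⟨s', rfl⟩ heq
    have hdiff : a * (p * t) - a * (p * t') = q * s' - q * s :=
      sub_eq_sub_iff_add_eq_add.mpr (heq.trans (add_comm _ _))
    have hqd : ∃ w, a * (p * t) - a * (p * t') = q * w := by
      exact ⟨s' - s, by rw [hdiff, mul_sub]⟩
    have hb0 : b * (a * (p * t) - a * (p * t')) = 0 := (hk _).mpr hqd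
    obtain ⟨r, hr⟩ := (hbp (p * t - p * t')).mpr ⟨t - t', by rw [mul_sub]⟩
    have : p * t - p * t' = 0 := by
      have h1 : b * (a * (p * t) - a * (p * t')) = p * t - p * t' := by
        have e : a * (p * t) - a * (p * t') = a * (b * r) := by rw [← mul_sub, hr]
        rw [e, ← mul_assoc, ← mul_assoc, hbab, ← hr]
      rw [hb0] at h1
      exact h1.symm
    have hu : a * (p * t) = a * (p * t') := by
      have := congrArg (a * ·) (sub_eq_zero.mp this)
      simpa using this
    refine ⟨hu, ?_⟩
    have := heq
    rw [hu] at this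
    exact (add_left_cancel this)
end

section
/- Let R be a unital ring, a ∈ R, p, q idempotents. If there exist s, t ∈ R such that p = t(1-q)ap and 1-q = (1-q)aps, then the element b = t(1-q) satisfies b = pb, bap = p, b(1-q) = b, (1-q)ab = 1-q, and bab = b; in particular the (p,q,l)-outer generalized inverse of a exists. -/
theorem stmt_12 {R : Type*} [Ring R] (a p q s t : R)
    (hp : IsIdempotentElem p) (hq : IsIdempotentElem q)
    (h1 : p = t * (1 - q) * a * p) (h2 : 1 - q = (1 - q) * a * p * s) :
    (t * (1 - q)) = p * (t * (1 - q)) ∧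
    (t * (1 - q)) * a * p = p ∧
    (t * (1 - q)) * (1 - q) = t * (1 - q) ∧
    (1 - q) * a * (t * (1 - q)) = 1 - q ∧
    (t * (1 - q)) * a * (t * (1 - q)) = t * (1 - q) := by
  have hq' : (1 - q) * (1 - q) = 1 - q := hq.one_sub
  have hb : t * (1 - q) = p * s := by
    calc t * (1 - q) = t * ((1 - q) * (1 - q)) := (congrArg (fun x => t * x) hq').symm
    _ = t * ((1 - q) * a * p * s) := by rw [← h2, hq']
    _ = t * (1 - q) * a * p * s := by noncomm_ring
    _ = p * s := by rw [← h1]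
  refine ⟨?_, h1.symm, ?_, ?_, ?_⟩
  · calc t * (1 - q) = p * s := hb
    _ = p * p * s := by rw [hp]
    _ = p * (p * s) := by noncomm_ring
    _ = p * (t * (1 - q)) := by rw [← hb]
  · calc t * (1 - q) * (1 - q) = t * ((1 - q) * (1 - q)) := by noncomm_ring
    _ = t * (1 - q) := by rw [hq']
  · calc (1 - q) * a * (t * (1 - q)) = (1 - q) * a * (p * s) := by rw [hb]
    _ = (1 - q) * a * p * s := by noncomm_ring
    _ = 1 - q := h2.symm
  · calc t * (1 - q) * a * (t * (1 - q)) = t * (1 - q) * a * (p * s) := by rw [hb]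
    _ = (t * (1 - q) * a * p) * s := by noncomm_ring
    _ = p * s := by rw [← h1]
    _ = t * (1 - q) := hb.symm
end

section
/- Let R be a unital ring, a ∈ R, p, q idempotents. If there exists b with aba = a, bab = b, bR = pR, K_r(b) = qR, then R = aR ⊕ qR and R = K_r(a) ⊕ pR (internal direct sums of additive subgroups). -/
theorem stmt_14 {R : Type*} [Ring R] (a p q : R)
    (hp : IsIdempotentElem p) (hq : IsIdempotentElem q)
    (h : ∃ b : R, a * b * a = a ∧ b * a * b = b ∧
      {y : R | ∃ t : R, y = b * t} = {y : R | ∃ t : R, y = p * t} ∧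
      {z : R | b * z = 0} = {y : R | ∃ t : R, y = q * t}) :
    ((∀ x : R, ∃ u ∈ {y : R | ∃ t : R, y = a * t}, ∃ v ∈ {y : R | ∃ t : R, y = q * t},
        x = u + v) ∧
      {y : R | ∃ t : R, y = a * t} ∩ {y : R | ∃ t : R, y = q * t} = {0}) ∧
    ((∀ x : R, ∃ u ∈ {z : R | a * z = 0}, ∃ v ∈ {y : R | ∃ t : R, y = p * t},
        x = u + v) ∧
      {z : R | a * z = 0} ∩ {y : R | ∃ t : R, y = p * t} = {0}) := by
  obtain ⟨b, h1, h2, hbp, hbq⟩ := h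
  constructor
  · constructor
    · intro x
      refine ⟨a * (b * x), ⟨b * x, rfl⟩, x - a * (b * x), ?_, by noncomm_ring⟩
      have hm : x - a * (b * x) ∈ {z : R | b * z = 0} := by
        show b * (x - a * (b * x)) = 0
        calc b * (x - a * (b * x)) = b * x - (b * a * b) * x := by noncomm_ring
          _ = 0 := by rw [h2]; noncomm_ring
      rw [hbq] at hm; exact hm
    · ext z
      simp only [Set.mem_inter_iff, Set.mem_setOf_eq, Set.mem_singleton_iff]
      constructor
      · rintro ⟨⟨t, rfl⟩, hz⟩
        have hz' : a * t ∈ {z : R | b * z = 0} := by rw [hbq]; exact hz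
        have hz'' : b * (a * t) = 0 := hz'
        calc a * t = (a * b * a) * t := by rw [h1]
          _ = a * (b * (a * t)) := by noncomm_ring
          _ = 0 := by rw [hz'']; noncomm_ring
      · rintro rfl
        exact ⟨⟨0, (mul_zero a).symm⟩, ⟨0, (mul_zero q).symm⟩⟩
  · constructor
    · intro x
      refine ⟨x - b * (a * x), ?_, b * (a * x), ?_, by noncomm_ring⟩
      · show a * (x - b * (a * x)) = 0
        calc a * (x - b * (a * x)) = a * x - (a * b * a) * x := by noncomm_ring
          _ = 0 := by rw [h1]; noncomm_ring
      · have : b * (a * x) ∈ {y : R | ∃ t : R, y = b * t} := ⟨a * x, rfl⟩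
        rw [hbp] at this; exact this
    · ext z
      simp only [Set.mem_inter_iff, Set.mem_setOf_eq, Set.mem_singleton_iff]
      constructor
      · rintro ⟨hz, ⟨t, rfl⟩⟩
        have : p * t ∈ {y : R | ∃ t : R, y = b * t} := by rw [hbp]; exact ⟨t, rfl⟩
        obtain ⟨s, hs⟩ := this
        rw [hs] at hz ⊢
        calc b * s = (b * a * b) * s := by rw [h2]
          _ = b * (a * (b * s)) := by noncomm_ring
          _ = 0 := by rw [hz]; noncomm_ring
      · rintro rfl
        exact ⟨mul_zero a, ⟨0, (mul_zero p).symm⟩⟩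
end

section
/- Let R be a unital ring, a ∈ R, p, q idempotents. Suppose b is the (p,q,l)-outer generalized inverse of a (bab = b, bR = pR, K_r(b) = qR) and additionally aR ∩ qR = {0}. Then aba = a. -/
theorem stmt_15 {R : Type*} [Ring R] (a p q b : R)
    (hp : IsIdempotentElem p) (hq : IsIdempotentElem q)
    (h1 : b * a * b = b)
    (h2 : {y : R | ∃ t : R, y = b * t} = {y : R | ∃ t : R, y = p * t})
    (h3 : {z : R | b * z = 0} = {y : R | ∃ t : R, y = q * t})
    (h4 : {y : R | ∃ t : R, y = a * t} ∩ {y : R | ∃ t : R, y = q * t} = {0}) :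
    a * b * a = a := by
  set x := a - a * b * a with hx
  have hbx : b * x = 0 := by
    have : b * (a * b * a) = b * a := by
      calc b * (a * b * a) = (b * a * b) * a := by noncomm_ring
        _ = b * a := by rw [h1]
    simp [hx, mul_sub, this]
  have hxq : x ∈ {y : R | ∃ t : R, y = q * t} := h3 ▸ hbx
  have hxa : x ∈ {y : R | ∃ t : R, y = a * t} := ⟨1 - b * a, by rw [hx]; noncomm_ring⟩
  have : x ∈ ({0} : Set R) := h4 ▸ Set.mem_inter hxa hxq
  have hx0 : x = 0 := this
  exact (sub_eq_zero.mp hx0).symm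
end

section
/- Let R be a unital ring, a ∈ R, p, q idempotents, and suppose b satisfies aba = a, bab = b, bR = pR, K_r(b) = qR, aR = (1-q)R, and K_r(a) = (1-p)R. Then ba = p and ab = 1 - q. -/
theorem stmt_16 {R : Type*} [Ring R] (a p q b : R)
    (hp : IsIdempotentElem p) (hq : IsIdempotentElem q)
    (h1 : a * b * a = a) (h2 : b * a * b = b)
    (h3 : {y : R | ∃ t : R, y = b * t} = {y : R | ∃ t : R, y = p * t})
    (h4 : {z : R | b * z = 0} = {y : R | ∃ t : R, y = q * t})
    (h5 : {y : R | ∃ t : R, y = a * t} = {y : R | ∃ t : R, y = (1 - q) * t})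
    (h6 : {z : R | a * z = 0} = {y : R | ∃ t : R, y = (1 - p) * t}) :
    b * a = p ∧ a * b = 1 - q := by
  -- b ∈ pR : b = p * t
  obtain ⟨t, ht⟩ : b ∈ {y : R | ∃ t : R, y = p * t} := h3 ▸ ⟨1, (mul_one b).symm⟩
  have hpb : p * b = b := by rw [ht, ← mul_assoc, hp]
  -- a ∈ (1-q)R : q * a = 0 after
  obtain ⟨u, hu⟩ : a ∈ {y : R | ∃ t : R, y = (1 - q) * t} := h5 ▸ ⟨1, (mul_one a).symm⟩
  -- 1 - q ∈ aR : 1 - q = a * s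
  obtain ⟨s, hs⟩ : (1 - q : R) ∈ {y : R | ∃ t : R, y = a * t} := by
    rw [h5]; exact ⟨1, (mul_one _).symm⟩
  -- b * q = 0 since q ∈ qR = K_r(b)
  have hbq : b * q = 0 := by
    have : q ∈ {z : R | b * z = 0} := by rw [h4]; exact ⟨1, (mul_one q).symm⟩
    exact this
  -- a*(1 - b*a) = 0 so 1 - b*a ∈ (1-p)R
  obtain ⟨v, hv⟩ : (1 - b * a : R) ∈ {y : R | ∃ t : R, y = (1 - p) * t} := by
    rw [← h6]; show a * (1 - b * a) = 0
    rw [mul_sub, mul_one, ← mul_assoc, h1, sub_self]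
  have hba : b * a = p := by
    have hpv : p * (1 - b * a) = 0 := by
      rw [hv, ← mul_assoc, mul_sub, mul_one, hp, sub_self, zero_mul]
    have := hpv
    rw [mul_sub, mul_one, ← mul_assoc, hpb, sub_eq_zero] at this
    exact this.symm
  refine ⟨hba, ?_⟩
  have h1q : a * b * (1 - q) = 1 - q := by rw [hs, ← mul_assoc, h1]
  have h0 : a * b * q = 0 := by rw [mul_assoc, hbq, mul_zero]
  calc a * b = a * b * (1 - q) + a * b * q := by noncomm_ring
    _ = 1 - q := by rw [h1q, h0, add_zero]
end

section
/- Let R be a unital ring, a, w ∈ R, and p, q idempotents with wR = pR and K_r(w) = qR. Suppose b is the (p,q,l)-outer generalized inverse of a (bab = b, bR = pR, K_r(b) = qR). Then aw has a group inverse c (awcaw = aw, c(aw)c = c, c(aw) = (aw)c) and b = wc. -/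
theorem stmt_17 {R : Type*} [Ring R] (a w p q b : R)
    (hp : IsIdempotentElem p) (hq : IsIdempotentElem q)
    (hw1 : {y : R | ∃ t : R, y = w * t} = {y : R | ∃ t : R, y = p * t})
    (hw2 : {z : R | w * z = 0} = {y : R | ∃ t : R, y = q * t})
    (h1 : b * a * b = b)
    (h2 : {y : R | ∃ t : R, y = b * t} = {y : R | ∃ t : R, y = p * t})
    (h3 : {z : R | b * z = 0} = {y : R | ∃ t : R, y = q * t}) :
    ∃ c : R, (a * w) * c * (a * w) = a * w ∧ c * (a * w) * c = c ∧
      c * (a * w) = (a * w) * c ∧ b = w * c := by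
  -- kernel transfer: w*z = 0 ↔ b*z = 0
  have hker : ∀ z : R, w * z = 0 ↔ b * z = 0 := by
    intro z
    exact (Set.ext_iff.mp hw2 z).trans (Set.ext_iff.mp h3 z).symm
  -- b = w * t for some t
  obtain ⟨t, ht⟩ : ∃ t : R, b = w * t := by
    have hbp : b ∈ {y : R | ∃ t : R, y = p * t} := by
      rw [← h2]; exact ⟨1, (mul_one b).symm⟩
    exact (Set.ext_iff.mp hw1 b).mpr hbp
  -- w = b * s for some s
  obtain ⟨s, hs⟩ : ∃ s : R, w = b * s := by
    have hwp : w ∈ {y : R | ∃ t : R, y = p * t} := by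
      rw [← hw1]; exact ⟨1, (mul_one w).symm⟩
    exact (Set.ext_iff.mp h2 w).mpr hwp
  -- b * a * w = w
  have hbaw : b * (a * w) = w := by
    calc b * (a * w) = b * (a * (b * s)) := by rw [← hs]
    _ = (b * a * b) * s := by noncomm_ring
    _ = b * s := by rw [h1]
    _ = w := hs.symm
  -- w * a * b = w
  have hwab : w * (a * b) = w := by
    have e1 : b * (1 - a * b) = 0 := by
      have : b * (1 - a * b) = b - b * a * b := by noncomm_ring
      rw [this, h1, sub_self]
    have e2 : w * (1 - a * b) = 0 := (hker _).mpr e1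
    have e3 : w * (1 - a * b) = w - w * (a * b) := by noncomm_ring
    rw [e3, sub_eq_zero] at e2
    exact e2.symm
  -- b * (t * (a * w)) = b
  have hbt : b * (t * (a * w)) = b := by
    have e1 : w * (t * (a * w) - 1) = 0 := by
      have : w * (t * (a * w) - 1) = (w * t) * (a * w) - w := by noncomm_ring
      rw [this, ← ht, hbaw, sub_self]
    have e2 : b * (t * (a * w) - 1) = 0 := (hker _).mp e1
    have e3 : b * (t * (a * w) - 1) = b * (t * (a * w)) - b := by noncomm_ring
    rw [e3, sub_eq_zero] at e2
    exact e2
  -- idempotent e = a*b facts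
  have heab : (a * b) * (a * b) = a * b := by
    calc (a * b) * (a * b) = a * (b * a * b) := by noncomm_ring
    _ = a * b := by rw [h1]
  have hex : (a * b) * (a * w) = a * w := by
    calc (a * b) * (a * w) = a * (b * (a * w)) := by noncomm_ring
    _ = a * w := by rw [hbaw]
  -- key products with the candidate c = a*b*(t*(a*b))
  have hxc : (a * w) * (a * b * (t * (a * b))) = a * b := by
    calc (a * w) * (a * b * (t * (a * b)))
        = (a * (w * (a * b))) * (t * (a * b)) := by noncomm_ring
    _ = (a * (w * t)) * (a * b) := by rw [hwab]; noncomm_ring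
    _ = (a * b) * (a * b) := by rw [← ht]
    _ = a * b := heab
  have hcx : (a * b * (t * (a * b))) * (a * w) = a * b := by
    calc (a * b * (t * (a * b))) * (a * w)
        = (a * b) * t * ((a * b) * (a * w)) := by noncomm_ring
    _ = a * (b * (t * (a * w))) := by rw [hex]; noncomm_ring
    _ = a * b := by rw [hbt]
  -- the group inverse
  refine ⟨a * b * (t * (a * b)), ?_, ?_, hcx.trans hxc.symm, ?_⟩
  · rw [hxc, hex]
  · calc (a * b * (t * (a * b))) * (a * w) * (a * b * (t * (a * b)))
        = (a * b) * (a * b * (t * (a * b))) := by rw [hcx]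
    _ = ((a * b) * (a * b)) * (t * (a * b)) := by noncomm_ring
    _ = a * b * (t * (a * b)) := by rw [heab]
  · calc b = b * a * b := h1.symm
    _ = (w * t) * (a * b) := by rw [← ht]; noncomm_ring
    _ = (w * (a * b)) * (t * (a * b)) := by rw [hwab]; noncomm_ring
    _ = w * (a * b * (t * (a * b))) := by noncomm_ring
end

section
/- Let R be a unital ring, a, w ∈ R, p, q idempotents with wR = pR and K_r(w) = qR. If aw has a group inverse and K_r(a) ∩ wR = {0}, then waw(aw)^# = w, wa has a group inverse equal to w((aw)^#)²a, and the element b = (wa)^# w satisfies bab = b, bR = pR, K_r(b) = qR (i.e., b = a^{(2,l)}_{p,q}). -/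
theorem stmt_18 {R : Type*} [Ring R] (a w p q c : R)
    (hp : IsIdempotentElem p) (hq : IsIdempotentElem q)
    (hw1 : {y : R | ∃ t : R, y = w * t} = {y : R | ∃ t : R, y = p * t})
    (hw2 : {z : R | w * z = 0} = {y : R | ∃ t : R, y = q * t})
    (hc1 : (a * w) * c * (a * w) = a * w) (hc2 : c * (a * w) * c = c)
    (hc3 : c * (a * w) = (a * w) * c)
    (hker : {z : R | a * z = 0} ∩ {y : R | ∃ t : R, y = w * t} = {0}) :
    w * a * w * c = w ∧
    ((w * a) * (w * c * c * a) * (w * a) = w * a ∧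
      (w * c * c * a) * (w * a) * (w * c * c * a) = w * c * c * a ∧
      (w * c * c * a) * (w * a) = (w * a) * (w * c * c * a)) ∧
    ((w * c * c * a) * w) * a * ((w * c * c * a) * w) = (w * c * c * a) * w ∧
    {y : R | ∃ t : R, y = ((w * c * c * a) * w) * t} = {y : R | ∃ t : R, y = p * t} ∧
    {z : R | ((w * c * c * a) * w) * z = 0} = {y : R | ∃ t : R, y = q * t} := by
  simp only [← mul_assoc] at hc1 hc2 hc3
  -- hc1 : a*w*c*a*w = a*w, hc2 : c*a*w*c = c, hc3 : c*a*w = a*w*c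
  have R3' : c*(a*w) = a*(w*c) := by simp only [← mul_assoc]; exact hc3
  have R3 : ∀ x : R, c*(a*(w*x)) = a*(w*(c*x)) := fun x => by
    simp only [← mul_assoc]; rw [hc3]
  have R2' : c*(a*(w*c)) = c := by simp only [← mul_assoc]; exact hc2
  have R2 : ∀ x : R, c*(a*(w*(c*x))) = c*x := fun x => by
    simp only [← mul_assoc]; rw [hc2]
  have R1' : a*(w*(c*(a*w))) = a*w := by simp only [← mul_assoc]; exact hc1
  have R1 : ∀ x : R, a*(w*(c*(a*(w*x)))) = a*(w*x) := fun x => by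
    simp only [← mul_assoc]; rw [hc1]
  have hAA : a*(w*(a*(w*c))) = a*w := by rw [← R3', R1']
  have key : w*(a*(w*c)) - w ∈ ({z : R | a * z = 0} ∩ {y : R | ∃ t : R, y = w * t}) := by
    constructor
    · show a * (w*(a*(w*c)) - w) = 0
      rw [mul_sub, hAA, sub_self]
    · exact ⟨a*(w*c) - 1, by rw [mul_sub, mul_one]⟩
  rw [hker] at key
  have h0 : w*(a*(w*c)) = w := sub_eq_zero.mp (Set.mem_singleton_iff.mp key)
  have h0L : w*a*w*c = w := by simpa only [← mul_assoc] using h0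
  have R0' : w*(a*(w*c)) = w := h0
  have R0 : ∀ x : R, w*(a*(w*(c*x))) = w*x := fun x => by
    simp only [← mul_assoc]; rw [h0L]
  have hbw : ∀ t : R, ((w * c * c * a) * w) * t = w * (c*(c*(a*(w*t)))) := fun t => by
    simp only [mul_assoc]
  have hwb : ∀ t : R, ((w * c * c * a) * w) * (a * (w * t)) = w * t := fun t => by
    simp only [mul_assoc]; simp only [R0, R0', R1, R1', R2, R2', R3, R3']
  have habz : ∀ z : R, w * z = w * (a * (((w * c * c * a) * w) * z)) := fun z => by
    simp only [mul_assoc]; simp only [R0, R0', R1, R1', R2, R2', R3, R3']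
  refine ⟨?_, ⟨?_, ?_, ?_⟩, ?_, ?_, ?_⟩
  · exact h0L
  · simp only [mul_assoc]; simp only [R0, R0', R1, R1', R2, R2', R3, R3']
  · simp only [mul_assoc]; simp only [R0, R0', R1, R1', R2, R2', R3, R3']
  · simp only [mul_assoc]; simp only [R0, R0', R1, R1', R2, R2', R3, R3']
  · simp only [mul_assoc]; simp only [R0, R0', R1, R1', R2, R2', R3, R3']
  · rw [← hw1]
    ext y
    constructor
    · rintro ⟨t, rfl⟩
      exact ⟨c*(c*(a*(w*t))), hbw t⟩
    · rintro ⟨t, rfl⟩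
      exact ⟨a*(w*t), (hwb t).symm⟩
  · rw [← hw2]
    ext z
    constructor
    · intro hz
      have := habz z
      rw [hz, mul_zero, mul_zero] at this
      exact this
    · intro hz
      show ((w * c * c * a) * w) * z = 0
      rw [hbw z, hz, mul_zero, mul_zero, mul_zero, mul_zero]
end

section
/- Let R be a unital ring, a, w ∈ R, p, q idempotents with wR = pR and K_r(w) = qR. If wa has a group inverse and wR = (waw)R, then w = wa(wa)^# w and the element b = (wa)^# w satisfies bab = b, bR = pR, and K_r(b) = qR; moreover waw is inner regular with inner inverse a((wa)^#)², and b = w(waw)⁻w for this inner inverse (waw)⁻ = a((wa)^#)². -/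
theorem stmt_19 {R : Type*} [Ring R] (a w p q d : R)
    (hp : IsIdempotentElem p) (hq : IsIdempotentElem q)
    (hw1 : {y : R | ∃ t : R, y = w * t} = {y : R | ∃ t : R, y = p * t})
    (hw2 : {z : R | w * z = 0} = {y : R | ∃ t : R, y = q * t})
    (hd1 : (w * a) * d * (w * a) = w * a) (hd2 : d * (w * a) * d = d)
    (hd3 : d * (w * a) = (w * a) * d)
    (hr : {y : R | ∃ t : R, y = w * t} = {y : R | ∃ t : R, y = (w * a * w) * t}) :
    w = w * a * d * w ∧
    (d * w) * a * (d * w) = d * w ∧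
    {y : R | ∃ t : R, y = (d * w) * t} = {y : R | ∃ t : R, y = p * t} ∧
    {z : R | (d * w) * z = 0} = {y : R | ∃ t : R, y = q * t} ∧
    (w * a * w) * (a * d * d) * (w * a * w) = w * a * w ∧
    d * w = w * (a * d * d) * w := by
  -- extract t with w = w*a*w*t
  have hw : w ∈ {y : R | ∃ t : R, y = w * t} := ⟨1, by simp⟩
  rw [hr] at hw
  obtain ⟨t, ht⟩ := hw
  have h1 : w = w * a * d * w := by
    calc w = w * a * w * t := ht
    _ = (w * a * d * (w * a)) * w * t := by rw [hd1]
    _ = w * a * d * (w * a * w * t) := by noncomm_ring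
    _ = w * a * d * w := by rw [← ht]
  have h2 : (d * w) * a * (d * w) = d * w := by
    calc d * w * a * (d * w) = (d * (w * a) * d) * w := by noncomm_ring
    _ = d * w := by rw [hd2]
  have key : {y : R | ∃ t : R, y = (d * w) * t} = {y : R | ∃ t : R, y = w * t} := by
    ext y
    constructor
    · rintro ⟨s, rfl⟩
      refine ⟨a * d * d * w * s, ?_⟩
      calc d * w * s = d * (w * a * d * w) * s := by rw [← h1]
      _ = (d * (w * a)) * (d * w) * s := by noncomm_ring
      _ = (w * a) * d * (d * w) * s := by rw [hd3]
      _ = w * (a * d * d * w * s) := by noncomm_ring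
    · rintro ⟨s, rfl⟩
      refine ⟨a * w * s, ?_⟩
      calc w * s = w * a * d * w * s := by rw [← h1]
      _ = d * (w * a) * w * s := by rw [hd3]
      _ = d * w * (a * w * s) := by noncomm_ring
  have keyk : {z : R | (d * w) * z = 0} = {z : R | w * z = 0} := by
    ext z
    constructor
    · intro hz
      simp only [Set.mem_setOf_eq] at hz ⊢
      calc w * z = w * a * d * w * z := by rw [← h1]
      _ = w * a * (d * w * z) := by noncomm_ring
      _ = 0 := by rw [hz, mul_zero]
    · intro hz
      simp only [Set.mem_setOf_eq] at hz ⊢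
      calc d * w * z = d * (w * z) := by noncomm_ring
      _ = 0 := by rw [hz, mul_zero]
  refine ⟨h1, h2, key.trans hw1, keyk.trans hw2, ?_, ?_⟩
  · calc (w * a * w) * (a * d * d) * (w * a * w)
        = w * a * ((w * a) * d) * (d * (w * a)) * w := by noncomm_ring
    _ = w * a * (d * (w * a)) * (d * (w * a)) * w := by rw [hd3]
    _ = w * a * (d * ((w * a) * d * (w * a))) * w := by noncomm_ring
    _ = w * a * (d * (w * a)) * w := by rw [hd1]
    _ = w * a * ((w * a) * d) * w := by rw [hd3]
    _ = w * a * (w * a * d * w) := by noncomm_ring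
    _ = w * a * w := by rw [← h1]
  · calc d * w = d * (w * a * d * w) := by rw [← h1]
    _ = (d * (w * a)) * (d * w) := by noncomm_ring
    _ = ((w * a) * d) * (d * w) := by rw [hd3]
    _ = w * (a * d * d) * w := by noncomm_ring
end
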